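/- arXiv:2005.11068 — 3 statements merged into one kernel-verified Lean document; each statement's English description precedes it below -/
import Mathlib

section
/- Fix a real number r ≥ 0, a unit vector direction with inner product c = ⟨ξ, ω⟩ ∈ [−1,1], a real momentum magnitude p ≥ 0, and a fixed real ρ. Then the limit as R → ∞ of (cosh(r/R) − c · sinh(r/R))^{−(ρ + i p R)} equals exp(i p c r). -/
/-!
For large `R` the base `cosh (r / R) - c sinh (r / R)` is close to `1`, so
`z ^ w = exp (w * log z)` with the real logarithm. The function `h x = log (cosh x - c sinh x)`
vanishes at `0` with derivative `-c` there, so `h (r / R) → 0` and `R * h (r / R) → -c r`; hence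
the exponent `-(ρ + i p R) * h (r / R)` tends to `i p c r`.
-/

open Complex Real Filter Topology

theorem tendsto_mul_comp_div_atTop_of_hasDerivAt {f : ℝ → ℝ} {f' : ℝ} (hf : HasDerivAt f f' 0)
    (hf0 : f 0 = 0) (r : ℝ) :
    Tendsto (fun R : ℝ => R * f (r / R)) atTop (𝓝 (f' * r)) := by
  have hg : HasDerivAt (fun t => f (r * t)) (f' * r) 0 :=
    hf.comp_of_eq 0 (by simpa using (hasDerivAt_id (0 : ℝ)).const_mul r) (mul_zero r).symm
  refine (hg.tendsto_slope_zero_right.comp tendsto_inv_atTop_nhdsGT_zero).congr fun R => ?_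
  simp [hf0, div_eq_mul_inv]

theorem tendsto_cpow_add_mul_of_hasDerivAt {f : ℝ → ℝ} {f' : ℝ} (hf : HasDerivAt f f' 0)
    (hf0 : f 0 = 1) (r : ℝ) (a b : ℂ) :
    Tendsto (fun R : ℝ => (f (r / R) : ℂ) ^ (a + b * R)) atTop (𝓝 (exp (b * (f' * r : ℝ)))) := by
  have hlog : HasDerivAt (fun x => Real.log (f x)) f' 0 := by
    simpa [hf0] using hf.log (by simp [hf0])
  have hx : Tendsto (fun R : ℝ => r / R) atTop (𝓝 0) := tendsto_const_nhds.div_atTop tendsto_id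
  have hlog_lim : Tendsto (fun R : ℝ => Real.log (f (r / R))) atTop (𝓝 0) := by
    simpa [hf0, Function.comp_def] using hlog.continuousAt.tendsto.comp hx
  have hmul_lim := tendsto_mul_comp_div_atTop_of_hasDerivAt hlog (by simp [hf0]) r
  have hpos : ∀ᶠ R in atTop, 0 < f (r / R) :=
    hx.eventually (hf.continuousAt.eventually (lt_mem_nhds (by simp [hf0])))
  have hexponent : Tendsto (fun R : ℝ => (a + b * R) * (Real.log (f (r / R)) : ℂ)) atTop
      (𝓝 (b * (f' * r : ℝ))) := by
    have := (((continuous_ofReal.tendsto _).comp hlog_lim).const_mul a).add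
      (((continuous_ofReal.tendsto _).comp hmul_lim).const_mul b)
    rw [ofReal_zero, mul_zero, zero_add] at this
    refine this.congr fun R => ?_
    simp only [Function.comp, ofReal_mul]
    ring
  refine ((Complex.continuous_exp.tendsto _).comp hexponent).congr' ?_
  filter_upwards [hpos] with R hR
  rw [Function.comp_apply, cpow_def_of_ne_zero (ofReal_ne_zero.2 hR.ne'), ← ofReal_log hR.le,
    mul_comm]

theorem hyperbolic_plane_wave_euclidean_limit_general
    (r : ℝ) (c : ℝ) (p : ℝ) (ρ : ℝ) :
    Filter.Tendsto
      (fun R : ℝ =>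
        ((Real.cosh (r / R) - c * Real.sinh (r / R) : ℝ) : ℂ) ^
          (-(↑ρ + Complex.I * ↑p * ↑R)))
      Filter.atTop (nhds (Complex.exp (Complex.I * ↑p * ↑c * ↑r))) := by
  have hf : HasDerivAt (fun x => Real.cosh x - c * Real.sinh x) (-c) 0 :=
    ((Real.hasDerivAt_cosh 0).sub ((Real.hasDerivAt_sinh 0).const_mul c)).congr_deriv (by simp)
  have := tendsto_cpow_add_mul_of_hasDerivAt hf (by simp) r (-ρ) (-(I * p))
  convert this using 3 with R
  · ring
  · push_cast
    ring

theorem hyperbolic_plane_wave_euclidean_limit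
    (r : ℝ) (hr : 0 ≤ r) (c : ℝ) (hc : c ∈ Set.Icc (-1 : ℝ) 1)
    (p : ℝ) (hp : 0 ≤ p) (ρ : ℝ) :
    Filter.Tendsto
      (fun R : ℝ =>
        ((Real.cosh (r / R) - c * Real.sinh (r / R) : ℝ) : ℂ) ^
          (-(↑ρ + Complex.I * ↑p * ↑R)))
      Filter.atTop (nhds (Complex.exp (Complex.I * ↑p * ↑c * ↑r))) :=
  hyperbolic_plane_wave_euclidean_limit_general r c p ρ
end

section
/- For complex a and real z with 0 ≤ z < 1, the identity (1/2)(1+√z)^{−2a} + (1/2)(1−√z)^{−2a} = ₂F₁(a, a+1/2; 1/2; z) holds. -/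
/-!
Averaging the binomial series of `(1 + w) ^ c` at `w = ±√z` keeps its even terms, so with
`c = -2a` the average is `∑ₖ choose(-2a, 2k) zᵏ`. The duplication formula
`(2b)₂ₖ = 4ᵏ (b)ₖ (b + 1/2)ₖ` for rising factorials, applied to `b = a` and `b = 1/2`,
turns `choose(-2a, 2k) = (2a)₂ₖ / (2k)!` into the coefficient `(a)ₖ (a + 1/2)ₖ / ((1/2)ₖ k!)`.
-/

open Complex

/-- The Gauss hypergeometric series ₂F₁(α,β;γ;z) = ∑ (α)ₙ(β)ₙ/((γ)ₙ n!) zⁿ. -/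
noncomputable def hyp2F1 (α β γ z : ℂ) : ℂ :=
  ∑' n : ℕ,
    (∏ l ∈ Finset.range n, (α + l)) * (∏ l ∈ Finset.range n, (β + l)) /
      ((∏ l ∈ Finset.range n, (γ + l)) * (n.factorial : ℂ)) * z ^ n

open Finset

theorem Complex.hasSum_choose_mul_pow (c : ℂ) {w : ℂ} (hw : ‖w‖ < 1) :
    HasSum (fun n ↦ Ring.choose c n * w ^ n) ((1 + w) ^ c) := by
  have h := one_add_cpow_hasFPowerSeriesOnBall_zero (a := c) |>.hasSum
    (y := w) (by simpa [← ENNReal.ofReal_one, Metric.eball_ofReal] using hw)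
  simpa [binomialSeries, FormalMultilinearSeries.ofScalars_apply_eq, mul_comm] using h

theorem HasSum.hasSum_even_of_hasSum_neg {K : Type*} [Field K] [TopologicalSpace K]
    [IsTopologicalRing K] [NeZero (2 : K)] {c : ℕ → K} {w A B : K}
    (hA : HasSum (fun n ↦ c n * w ^ n) A) (hB : HasSum (fun n ↦ c n * (-w) ^ n) B) :
    HasSum (fun k ↦ c (2 * k) * (w ^ 2) ^ k) (1 / 2 * A + 1 / 2 * B) := by
  have hsum := (hA.mul_left (1 / 2)).add (hB.mul_left (1 / 2))
  have hodd : ∀ n ∉ Set.range (2 * ·),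
      1 / 2 * (c n * w ^ n) + 1 / 2 * (c n * (-w) ^ n) = 0 := by
    intro n hn
    have : Odd n := Nat.not_even_iff_odd.mp fun ⟨k, hk⟩ ↦ hn ⟨k, show 2 * k = n by omega⟩
    rw [this.neg_pow]
    ring
  convert (Function.Injective.hasSum_iff (mul_right_injective₀ two_ne_zero) hodd).mpr hsum
    using 2 with k
  simp only [Function.comp_apply, (even_two_mul k).neg_pow, ← pow_mul]
  field_simp
  ring

theorem Finset.prod_range_two_mul_two_mul_add {K : Type*} [Field K] [NeZero (2 : K)]
    (b : K) (k : ℕ) :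
    ∏ l ∈ range (2 * k), (2 * b + l) =
      4 ^ k * ((∏ l ∈ range k, (b + l)) * ∏ l ∈ range k, (b + 1 / 2 + l)) := by
  induction k with
  | zero => simp
  | succ k ih =>
    rw [Nat.mul_succ, prod_range_succ, prod_range_succ, ih, prod_range_succ, prod_range_succ]
    push_cast
    field_simp
    ring

theorem Ring.choose_eq_prod_range_div_factorial {K : Type*} [Field K] [CharZero K]
    (r : K) (n : ℕ) :
    Ring.choose r n = (∏ j ∈ range n, (r - j)) / n.factorial := by
  rw [Ring.choose_eq_smul, ← Polynomial.aeval_eq_smeval, Polynomial.aeval_def,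
    ← Polynomial.eval_map, descPochhammer_map, descPochhammer_eval_eq_prod_range, smul_eq_mul,
    div_eq_inv_mul]

theorem Nat.cast_factorial_two_mul {K : Type*} [Field K] [CharZero K] (k : ℕ) :
    ((2 * k).factorial : K) = 4 ^ k * ((∏ l ∈ range k, ((1 : K) / 2 + l)) * k.factorial) := by
  have h := prod_range_two_mul_two_mul_add (1 / 2 : K) k
  rw [mul_one_div_cancel two_ne_zero, add_halves] at h
  rw [← prod_range_add_one_eq_factorial, ← prod_range_add_one_eq_factorial k]
  push_cast
  simpa only [add_comm (1 : K)] using h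

theorem Ring.choose_neg_two_mul_two_mul {K : Type*} [Field K] [CharZero K] (a : K) (k : ℕ) :
    Ring.choose (-2 * a) (2 * k) =
      (∏ l ∈ range k, (a + l)) * (∏ l ∈ range k, (a + 1 / 2 + l)) /
        ((∏ l ∈ range k, ((1 : K) / 2 + l)) * k.factorial) := by
  have hnum : ∏ l ∈ range (2 * k), (-2 * a - l) = ∏ l ∈ range (2 * k), (2 * a + l) := by
    simp_rw [show ∀ l : ℕ, -2 * a - l = -(2 * a + l) from fun l ↦ by ring, prod_neg,
      card_range, (even_two_mul k).neg_one_pow, one_mul]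
  rw [choose_eq_prod_range_div_factorial, hnum, prod_range_two_mul_two_mul_add,
    Nat.cast_factorial_two_mul, mul_div_mul_left _ _ (pow_ne_zero _ (by norm_num))]

theorem half_sum_powers_eq_hyp2F1 (a : ℂ) (z : ℝ) (hz0 : 0 ≤ z) (hz1 : z < 1) :
    (1 / 2) * ((1 + Real.sqrt z : ℝ) : ℂ) ^ (-2 * a) +
      (1 / 2) * ((1 - Real.sqrt z : ℝ) : ℂ) ^ (-2 * a) =
      hyp2F1 a (a + 1 / 2) (1 / 2) (z : ℂ) := by
  have hw : ‖(Real.sqrt z : ℂ)‖ < 1 := by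
    rw [norm_real, Real.norm_of_nonneg (Real.sqrt_nonneg z), Real.sqrt_lt' one_pos, one_pow]
    exact hz1
  have hsq : (Real.sqrt z : ℂ) ^ 2 = z := by rw [← ofReal_pow, Real.sq_sqrt hz0]
  have h := (hasSum_choose_mul_pow (-2 * a) hw).hasSum_even_of_hasSum_neg
    (hasSum_choose_mul_pow (-2 * a) (by rwa [norm_neg]))
  simp only [hsq, Ring.choose_neg_two_mul_two_mul] at h
  push_cast
  rw [sub_eq_add_neg]
  exact h.tsum_eq.symm
end

section
/- For ρ > 0, real λ, and real r > 0 with λ·r > 0 fixed as a product p·r_E, the limit as λ → ∞ and χ → 0 with λχ = p·r_E fixed of the function ₂F₁((ρ+iλ)/2, (ρ−iλ)/2; ρ+1/2; −sinh²χ), taken along χ = r_E p/λ, equals the normalized Bessel function 2^{ρ−1/2} Γ(ρ+1/2) (p r_E)^{−(ρ−1/2)} J_{ρ−1/2}(p r_E). -/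
open Complex Real Filter

/-- The Bessel function of the first kind J_ν(x) for x > 0, via its power series. -/
noncomputable def besselJ (ν x : ℝ) : ℝ :=
  ∑' n : ℕ, (-1) ^ n / (n.factorial * Real.Gamma ((n : ℝ) + ν + 1)) *
    (x / 2) ^ ((2 * n : ℝ) + ν)

/-
Both series are sums of products of consecutive-term ratios. Because the parameters
`(ρ ± iλ)/2` are conjugate, the `k`-th ratio of the `₂F₁` series at `-sinh² (c/λ)` is the real
number `-((ρ/2 + k)² + (λ/2)²) sinh² (c/λ) / ((ρ + 1/2 + k)(k + 1))`, and since `λ sinh (c/λ) → c`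
it tends to `-(c/2)² / ((ρ + 1/2 + k)(k + 1))`, the `k`-th ratio of the power series of the
normalized Bessel function `2^ν Γ(ν + 1) x^(-ν) J_ν(x)` at `ν = ρ - 1/2`, `x = c`. For large `λ`
these ratios are bounded, uniformly in `λ`, by numbers that are eventually `≤ 1/2`; so the products
are dominated by a summable sequence and Tannery's theorem lets the limit pass through the sum.
-/

open Finset Topology

theorem summable_prod_range_of_eventually_norm_le {R : Type*} [NormedCommRing R]
    [CompleteSpace R] {B : ℕ → R} {r : ℝ} (hr : r < 1) (hB : ∀ᶠ k in atTop, ‖B k‖ ≤ r) :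
    Summable fun n => ∏ k ∈ range n, B k := by
  refine summable_of_ratio_norm_eventually_le hr ?_
  filter_upwards [hB] with n hn
  rw [prod_range_succ, mul_comm r]
  exact (norm_mul_le _ _).trans (by gcongr)

theorem tendsto_tsum_prod_range_of_norm_le {α R : Type*} [NormedCommRing R] [NormOneClass R]
    [CompleteSpace R] {l : Filter α} {f : α → ℕ → R} {g : ℕ → R} {B : ℕ → ℝ}
    (hB : Summable fun n => ∏ k ∈ range n, B k) (hf : ∀ k, Tendsto (f · k) l (𝓝 (g k)))
    (hfB : ∀ᶠ a in l, ∀ k, ‖f a k‖ ≤ B k) :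
    Tendsto (fun a => ∑' n, ∏ k ∈ range n, f a k) l (𝓝 (∑' n, ∏ k ∈ range n, g k)) := by
  refine tendsto_tsum_of_dominated_convergence hB
    (fun n => tendsto_finsetProd _ fun k _ => hf k) ?_
  filter_upwards [hfB] with a ha n
  exact (Finset.norm_prod_le _ _).trans
    (prod_le_prod (fun _ _ => norm_nonneg _) fun k _ => ha k)

theorem hyp2F1_eq_tsum_prod_range (α β γ z : ℂ) :
    hyp2F1 α β γ z = ∑' n, ∏ k ∈ range n, (α + k) * (β + k) * z / ((γ + k) * (k + 1)) := by
  refine tsum_congr fun n => ?_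
  rw [prod_div_distrib, prod_mul_distrib, prod_mul_distrib, prod_mul_distrib, prod_const,
    card_range, ← prod_range_add_one_eq_factorial, Nat.cast_prod]
  push_cast
  ring

/-- The ratio of the `(k+1)`-st to the `k`-th term of `₂F₁((ρ+iλ)/2, (ρ-iλ)/2; ρ+1/2; -x²)`. -/
noncomputable def conjHypRatio (ρ lam x : ℝ) (k : ℕ) : ℝ :=
  -(((ρ / 2 + k) ^ 2 + (lam / 2) ^ 2) * x ^ 2) / ((ρ + 1 / 2 + k) * (k + 1))

noncomputable def conjHypBound (ρ M : ℝ) (k : ℕ) : ℝ :=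
  ((ρ / 2 + k) ^ 2 + M) / (4 * ((ρ + 1 / 2 + k) * (k + 1)))

theorem hyp2F1_conj_neg_sq (ρ lam x : ℝ) :
    hyp2F1 ((↑ρ + I * ↑lam) / 2) ((↑ρ - I * ↑lam) / 2) (↑ρ + 1 / 2) (-(x : ℂ) ^ 2) =
      ((∑' n, ∏ k ∈ range n, conjHypRatio ρ lam x k : ℝ) : ℂ) := by
  rw [hyp2F1_eq_tsum_prod_range, ofReal_tsum]
  refine tsum_congr fun n => ?_
  rw [ofReal_prod]
  refine prod_congr rfl fun k _ => ?_
  rw [conjHypRatio]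
  push_cast
  congr 1
  linear_combination ((lam : ℂ) ^ 2 / 4 * x ^ 2) * I_sq

theorem Real.Gamma_add_nat_eq_mul_prod (x : ℝ) (hx : ∀ k : ℕ, x + k ≠ 0) (n : ℕ) :
    Real.Gamma (x + n) = Real.Gamma x * ∏ k ∈ range n, (x + k) := by
  induction n with
  | zero => simp
  | succ n ih =>
    rw [Nat.cast_succ, ← add_assoc, Real.Gamma_add_one (hx n), ih, prod_range_succ]
    ring

/-- The ratio of the `(k+1)`-st to the `k`-th term of `₀F₁(; γ; -x²/4)`. -/
noncomputable def besselRatio (γ x : ℝ) (k : ℕ) : ℝ := -(x / 2) ^ 2 / ((γ + k) * (k + 1))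

theorem normalized_besselJ_eq_tsum_prod_range (ν x : ℝ) (hν : 0 < ν + 1) (hx : 0 < x) :
    2 ^ ν * Real.Gamma (ν + 1) * x ^ (-ν) * besselJ ν x =
      ∑' n, ∏ k ∈ range n, besselRatio (ν + 1) x k := by
  simp only [besselRatio]
  rw [besselJ, ← tsum_mul_left]
  refine tsum_congr fun n => ?_
  have hΓ : Real.Gamma (n + ν + 1) = Real.Gamma (ν + 1) * ∏ k ∈ range n, (ν + 1 + k) := by
    rw [← Real.Gamma_add_nat_eq_mul_prod _ (fun k => by positivity)]
    ring_nf
  have hpow : (x / 2) ^ ((2 * n : ℝ) + ν) = ((x / 2) ^ 2) ^ n * (x ^ ν / 2 ^ ν) := by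
    rw [Real.rpow_add (by positivity), Real.div_rpow hx.le zero_le_two ν, ← pow_mul,
      ← Real.rpow_natCast]
    push_cast
    ring_nf
  have hΓ0 := (Real.Gamma_pos_of_pos hν).ne'
  have hprod0 : ∏ k ∈ range n, (ν + 1 + k) ≠ 0 := prod_ne_zero_iff.2 fun k _ => by positivity
  have hfact : (n.factorial : ℝ) = ∏ k ∈ range n, ((k : ℝ) + 1) := by
    rw [← prod_range_add_one_eq_factorial]
    push_cast
    rfl
  rw [prod_div_distrib, prod_mul_distrib, prod_const, card_range, ← hfact, hΓ, hpow,
    Real.rpow_neg hx.le]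
  field_simp
  exact (neg_pow _ n).symm

theorem mul_sinh_div_eq_mul_dslope (c t : ℝ) (ht : t ≠ 0) :
    t * Real.sinh (c / t) = c * dslope Real.sinh 0 (c / t) := by
  rcases eq_or_ne c 0 with rfl | hc
  · simp
  rw [dslope_of_ne _ (div_ne_zero hc ht), slope_def_field, Real.sinh_zero, sub_zero, sub_zero]
  field_simp

theorem tendsto_mul_sinh_div_atTop (c : ℝ) :
    Tendsto (fun t => t * Real.sinh (c / t)) atTop (𝓝 c) := by
  -- `dslope sinh 0` is `u ↦ sinh u / u`, extended continuously by `1` at `0`.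
  have hdslope : Tendsto (dslope Real.sinh 0) (𝓝 0) (𝓝 1) := by
    simpa [dslope_same, Real.deriv_sinh] using
      (continuousAt_dslope_same.2 (Real.differentiable_sinh 0)).tendsto
  have h := (hdslope.comp ((tendsto_const_nhds (x := c)).div_atTop tendsto_id)).const_mul c
  rw [mul_one] at h
  refine h.congr' ?_
  filter_upwards [eventually_gt_atTop 0] with t ht
  exact (mul_sinh_div_eq_mul_dslope c t ht.ne').symm

theorem tendsto_sinh_div_atTop (c : ℝ) : Tendsto (fun t => Real.sinh (c / t)) atTop (𝓝 0) := by
  simpa [Function.comp_def] using (Real.continuous_sinh.tendsto 0).comp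
    ((tendsto_const_nhds (x := c)).div_atTop tendsto_id)

theorem tendsto_conjHypRatio_sinh (ρ c : ℝ) (k : ℕ) :
    Tendsto (fun t => conjHypRatio ρ t (Real.sinh (c / t)) k) atTop
      (𝓝 (besselRatio (ρ + 1 / 2) c k)) := by
  have hnum := (((tendsto_sinh_div_atTop c).pow 2).const_mul ((ρ / 2 + k) ^ 2)).add
    (((tendsto_mul_sinh_div_atTop c).div_const 2).pow 2)
  rw [zero_pow two_ne_zero, mul_zero, zero_add] at hnum
  refine (hnum.neg.div_const _).congr fun t => ?_
  rw [conjHypRatio]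
  ring

theorem conjHypBound_nonneg {ρ M : ℝ} (hρ : 0 < ρ + 1 / 2) (hM : 0 ≤ M) (k : ℕ) :
    0 ≤ conjHypBound ρ M k := by
  have hk := k.cast_nonneg (α := ℝ)
  exact div_nonneg (by positivity) (by nlinarith)

theorem abs_conjHypRatio_le {ρ t x M : ℝ} (hρ : 0 < ρ + 1 / 2) (hx : x ^ 2 ≤ 1 / 4)
    (htx : (t * x) ^ 2 ≤ M) (k : ℕ) :
    |conjHypRatio ρ t x k| ≤ conjHypBound ρ M k := by
  have hD : 0 < (ρ + 1 / 2 + k) * (k + 1) := by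
    have hk := k.cast_nonneg (α := ℝ)
    exact mul_pos (by linarith) (by linarith)
  rw [conjHypRatio, conjHypBound, abs_div, abs_neg, abs_of_nonneg (by positivity), abs_of_pos hD,
    ← div_div ((ρ / 2 + k) ^ 2 + M) 4]
  refine (div_le_div_iff_of_pos_right hD).2 ?_
  rw [le_div_iff₀ four_pos]
  nlinarith [sq_nonneg (ρ / 2 + k)]

theorem eventually_conjHypBound_le_half {ρ : ℝ} (hρ : 0 < ρ + 1 / 2) (M : ℝ) :
    ∀ᶠ k : ℕ in atTop, conjHypBound ρ M k ≤ 1 / 2 := by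
  filter_upwards [(tendsto_natCast_atTop_atTop (R := ℝ)).eventually_ge_atTop (ρ ^ 2 + |M| + 1)]
    with k hk
  have hM := le_abs_self M
  have hk1 : (1 : ℝ) ≤ k := by nlinarith [sq_nonneg ρ, abs_nonneg M]
  rw [conjHypBound, div_le_iff₀ (by nlinarith)]
  nlinarith [mul_nonneg (sub_nonneg.2 hk1) (by linarith : (0 : ℝ) ≤ k),
    mul_nonneg (sub_nonneg.2 hk1) hρ.le]

theorem tendsto_tsum_conjHypRatio_sinh {ρ : ℝ} (hρ : 0 < ρ + 1 / 2) (c : ℝ) :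
    Tendsto (fun t => ∑' n, ∏ k ∈ range n, conjHypRatio ρ t (Real.sinh (c / t)) k) atTop
      (𝓝 (∑' n, ∏ k ∈ range n, besselRatio (ρ + 1 / 2) c k)) := by
  refine tendsto_tsum_prod_range_of_norm_le
    (B := conjHypBound ρ (c ^ 2 + 1))
    (summable_prod_range_of_eventually_norm_le one_half_lt_one ?_)
    (tendsto_conjHypRatio_sinh ρ c) ?_
  · filter_upwards [eventually_conjHypBound_le_half hρ (c ^ 2 + 1)] with k hk
    rwa [Real.norm_of_nonneg (conjHypBound_nonneg hρ (by positivity) k)]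
  · have hsinh_sq : (0 : ℝ) ^ 2 < 1 / 4 := by norm_num
    filter_upwards [((tendsto_sinh_div_atTop c).pow 2).eventually_le_const hsinh_sq,
      ((tendsto_mul_sinh_div_atTop c).pow 2).eventually_le_const (lt_add_one (c ^ 2))]
      with t hsinh hmul k
    exact abs_conjHypRatio_le hρ hsinh hmul k

theorem spherical_function_bessel_limit (ρ p rE : ℝ) (hρ : 0 < ρ) (hp : 0 < p)
    (hr : 0 < rE) :
    Filter.Tendsto
      (fun lam : ℝ =>
        hyp2F1 ((↑ρ + Complex.I * ↑lam) / 2) ((↑ρ - Complex.I * ↑lam) / 2) (↑ρ + 1 / 2)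
          (-(Real.sinh (rE * p / lam)) ^ 2))
      Filter.atTop
      (nhds ((2 ^ (ρ - 1 / 2) * Real.Gamma (ρ + 1 / 2) * (p * rE) ^ (-(ρ - 1 / 2)) *
        besselJ (ρ - 1 / 2) (p * rE) : ℝ) : ℂ)) := by
  have hJ := normalized_besselJ_eq_tsum_prod_range (ρ - 1 / 2) (p * rE) (by linarith)
    (by positivity)
  rw [show ρ - 1 / 2 + 1 = ρ + 1 / 2 by ring] at hJ
  rw [hJ, mul_comm p rE]
  simp_rw [hyp2F1_conj_neg_sq]
  exact (continuous_ofReal.tendsto _).comp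
    (tendsto_tsum_conjHypRatio_sinh (by linarith) (rE * p))
end
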